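/- The abort operator realizes every implication: for all formulas A and B, 𝒜^{A→B} ⊩ A → B. -/

import Mathlib

namespace LC

/-! ### First-order terms and formulas of the language L -/

/-- First-order individual terms: variables, constants, function applications. -/
inductive Tm : Type
  | var : ℕ → Tm
  | const : ℕ → Tm
  | fn : ℕ → List Tm → Tm

/-- Substitution of the term `m` for the first-order variable `α` in a term. -/
def Tm.subst (m : Tm) (α : ℕ) : Tm → Tm
  | .var β => if β = α then m else .var β
  | .const c => .const c
  | .fn f ts => .fn f (ts.attach.map (fun t => Tm.subst m α t.1))
decreasing_by
  have := List.sizeOf_lt_of_mem t.2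
  simp only [Tm.fn.sizeOf_spec]
  omega

/-- The first-order variable `α` occurs (free) in a term. -/
inductive Tm.FVt (α : ℕ) : Tm → Prop
  | var : Tm.FVt α (.var α)
  | fn {f : ℕ} {ts : List Tm} {t : Tm} : t ∈ ts → Tm.FVt α t → Tm.FVt α (.fn f ts)

/-- First-order formulas. -/
inductive Formula : Type
  | atom : ℕ → List Tm → Formula
  | imp  : Formula → Formula → Formula
  | conj : Formula → Formula → Formula
  | disj : Formula → Formula → Formula
  | all  : ℕ → Formula → Formula
  | ex   : ℕ → Formula → Formula

/-- Falsity: the distinguished 0-ary predicate symbol ⊥. -/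
def Formula.bot : Formula := .atom 0 []

/-- Atomic formulas. -/
def Formula.IsAtom : Formula → Prop
  | .atom _ _ => True
  | _ => False

/-- Substitution `A[m/α]` of a first-order term for a first-order variable in a formula. -/
def Formula.subst : Formula → ℕ → Tm → Formula
  | .atom P ts, α, m => .atom P (ts.map (Tm.subst m α))
  | .imp A B, α, m => .imp (A.subst α m) (B.subst α m)
  | .conj A B, α, m => .conj (A.subst α m) (B.subst α m)
  | .disj A B, α, m => .disj (A.subst α m) (B.subst α m)
  | .all β A, α, m => if β = α then .all β A else .all β (A.subst α m)
  | .ex β A, α, m => if β = α then .ex β A else .ex β (A.subst α m)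

/-- The first-order variable `α` occurs free in a formula. -/
inductive Formula.FVt (α : ℕ) : Formula → Prop
  | atom {P ts t} : t ∈ ts → Tm.FVt α t → Formula.FVt α (.atom P ts)
  | impL {A B} : Formula.FVt α A → Formula.FVt α (.imp A B)
  | impR {A B} : Formula.FVt α B → Formula.FVt α (.imp A B)
  | conjL {A B} : Formula.FVt α A → Formula.FVt α (.conj A B)
  | conjR {A B} : Formula.FVt α B → Formula.FVt α (.conj A B)
  | disjL {A B} : Formula.FVt α A → Formula.FVt α (.disj A B)
  | disjR {A B} : Formula.FVt α B → Formula.FVt α (.disj A B)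
  | all {β A} : β ≠ α → Formula.FVt α A → Formula.FVt α (.all β A)
  | ex {β A} : β ≠ α → Formula.FVt α A → Formula.FVt α (.ex β A)

/-- Logical depth of a formula (used for the well-founded definition of realizability). -/
def Formula.depth : Formula → ℕ
  | .atom _ _ => 0
  | .imp A B => max A.depth B.depth + 1
  | .conj A B => max A.depth B.depth + 1
  | .disj A B => max A.depth B.depth + 1
  | .all _ A => A.depth + 1
  | .ex _ A => A.depth + 1

theorem Formula.depth_subst (A : Formula) (α : ℕ) (m : Tm) :
    (A.subst α m).depth = A.depth := by
  induction A generalizing α m with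
  | atom P ts => simp [Formula.subst, Formula.depth]
  | imp A B ihA ihB => simp [Formula.subst, Formula.depth, ihA, ihB]
  | conj A B ihA ihB => simp [Formula.subst, Formula.depth, ihA, ihB]
  | disj A B ihA ihB => simp [Formula.subst, Formula.depth, ihA, ihB]
  | all β A ih => by_cases h : β = α <;> simp [Formula.subst, Formula.depth, h, ih]
  | ex β A ih => by_cases h : β = α <;> simp [Formula.subst, Formula.depth, h, ih]

/-! ### Proof terms of LC and LC⋆ (Church style: variables carry their type) -/

inductive PTerm : Type
  | var : ℕ → Formula → PTerm                      -- x^A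
  | lam : ℕ → Formula → PTerm → PTerm              -- λx^A u
  | app : PTerm → PTerm → PTerm                    -- t u
  | pair : PTerm → PTerm → PTerm                   -- ⟨u, v⟩
  | proj : PTerm → Bool → PTerm                    -- u π_i
  | inj : Bool → PTerm → PTerm                     -- ι_i(u)
  | case : PTerm → ℕ → PTerm → ℕ → PTerm → PTerm   -- u [x.w₁, y.w₂]
  | lamT : ℕ → PTerm → PTerm                       -- λα u
  | appT : PTerm → Tm → PTerm                      -- u m
  | exIntro : Tm → PTerm → PTerm                   -- (m, u)
  | exElim : PTerm → ℕ → ℕ → PTerm → PTerm         -- u [(α, x).v]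
  | efq : Formula → PTerm → PTerm                  -- efq_P(u)
  | par : ℕ → Formula → Formula → PTerm → PTerm → PTerm  -- u ∥ₐ v  (a : A→B in u, a : B→A in v)
  | abort : Formula → Formula → PTerm              -- 𝒜^{A→B}  (only in LC⋆)

/-- Proof terms of LC: those containing no abort constant. -/
def Pure : PTerm → Prop
  | .var _ _ => True
  | .lam _ _ u => Pure u
  | .app t u => Pure t ∧ Pure u
  | .pair t u => Pure t ∧ Pure u
  | .proj t _ => Pure t
  | .inj _ t => Pure t
  | .case t _ w1 _ w2 => Pure t ∧ Pure w1 ∧ Pure w2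
  | .lamT _ u => Pure u
  | .appT t _ => Pure t
  | .exIntro _ u => Pure u
  | .exElim t _ _ v => Pure t ∧ Pure v
  | .efq _ u => Pure u
  | .par _ _ _ u v => Pure u ∧ Pure v
  | .abort _ _ => False

/-- The proof-term variable `x` occurs free in a proof term. -/
def PTerm.FV (x : ℕ) : PTerm → Prop
  | .var z _ => z = x
  | .lam z _ u => z ≠ x ∧ PTerm.FV x u
  | .app t u => PTerm.FV x t ∨ PTerm.FV x u
  | .pair t u => PTerm.FV x t ∨ PTerm.FV x u
  | .proj t _ => PTerm.FV x t
  | .inj _ t => PTerm.FV x t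
  | .case t z w1 y w2 => PTerm.FV x t ∨ (z ≠ x ∧ PTerm.FV x w1) ∨ (y ≠ x ∧ PTerm.FV x w2)
  | .lamT _ u => PTerm.FV x u
  | .appT t _ => PTerm.FV x t
  | .exIntro _ u => PTerm.FV x u
  | .exElim t _ z v => PTerm.FV x t ∨ (z ≠ x ∧ PTerm.FV x v)
  | .efq _ u => PTerm.FV x u
  | .par a _ _ u v => a ≠ x ∧ (PTerm.FV x u ∨ PTerm.FV x v)
  | .abort _ _ => False

/-- The proof-term variable `x` occurs free with type annotation `A` in a proof term. -/
def PTerm.FVAnn (x : ℕ) (A : Formula) : PTerm → Prop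
  | .var z B => z = x ∧ B = A
  | .lam z _ u => z ≠ x ∧ PTerm.FVAnn x A u
  | .app t u => PTerm.FVAnn x A t ∨ PTerm.FVAnn x A u
  | .pair t u => PTerm.FVAnn x A t ∨ PTerm.FVAnn x A u
  | .proj t _ => PTerm.FVAnn x A t
  | .inj _ t => PTerm.FVAnn x A t
  | .case t z w1 y w2 =>
      PTerm.FVAnn x A t ∨ (z ≠ x ∧ PTerm.FVAnn x A w1) ∨ (y ≠ x ∧ PTerm.FVAnn x A w2)
  | .lamT _ u => PTerm.FVAnn x A u
  | .appT t _ => PTerm.FVAnn x A t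
  | .exIntro _ u => PTerm.FVAnn x A u
  | .exElim t _ z v => PTerm.FVAnn x A t ∨ (z ≠ x ∧ PTerm.FVAnn x A v)
  | .efq _ u => PTerm.FVAnn x A u
  | .par a _ _ u v => a ≠ x ∧ (PTerm.FVAnn x A u ∨ PTerm.FVAnn x A v)
  | .abort _ _ => False

/-- Substitution `t[s/x]` of a proof term for a proof-term variable. -/
def PTerm.substVar : PTerm → ℕ → PTerm → PTerm
  | .var z A, x, s => if z = x then s else .var z A
  | .lam z A u, x, s => if z = x then .lam z A u else .lam z A (u.substVar x s)
  | .app t u, x, s => .app (t.substVar x s) (u.substVar x s)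
  | .pair t u, x, s => .pair (t.substVar x s) (u.substVar x s)
  | .proj t b, x, s => .proj (t.substVar x s) b
  | .inj b t, x, s => .inj b (t.substVar x s)
  | .case t z w1 y w2, x, s =>
      .case (t.substVar x s) z (if z = x then w1 else w1.substVar x s)
        y (if y = x then w2 else w2.substVar x s)
  | .lamT β u, x, s => .lamT β (u.substVar x s)
  | .appT t m, x, s => .appT (t.substVar x s) m
  | .exIntro m u, x, s => .exIntro m (u.substVar x s)
  | .exElim t β z v, x, s => .exElim (t.substVar x s) β z (if z = x then v else v.substVar x s)
  | .efq P u, x, s => .efq P (u.substVar x s)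
  | .par a A B u v, x, s =>
      if a = x then .par a A B u v else .par a A B (u.substVar x s) (v.substVar x s)
  | .abort A B, _, _ => .abort A B

/-- Substitution `t[m/α]` of a first-order term for a first-order variable in a proof term. -/
def PTerm.substT : PTerm → ℕ → Tm → PTerm
  | .var z A, α, m => .var z (A.subst α m)
  | .lam z A u, α, m => .lam z (A.subst α m) (u.substT α m)
  | .app t u, α, m => .app (t.substT α m) (u.substT α m)
  | .pair t u, α, m => .pair (t.substT α m) (u.substT α m)
  | .proj t b, α, m => .proj (t.substT α m) b
  | .inj b t, α, m => .inj b (t.substT α m)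
  | .case t z w1 y w2, α, m =>
      .case (t.substT α m) z (w1.substT α m) y (w2.substT α m)
  | .lamT β u, α, m => if β = α then .lamT β u else .lamT β (u.substT α m)
  | .appT t r, α, m => .appT (t.substT α m) (Tm.subst m α r)
  | .exIntro r u, α, m => .exIntro (Tm.subst m α r) (u.substT α m)
  | .exElim t β z v, α, m =>
      .exElim (t.substT α m) β z (if β = α then v else v.substT α m)
  | .efq P u, α, m => .efq (P.subst α m) (u.substT α m)
  | .par a A B u v, α, m =>
      .par a (A.subst α m) (B.subst α m) (u.substT α m) (v.substT α m)
  | .abort A B, α, m => .abort (A.subst α m) (B.subst α m)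

/-! ### Typing (natural deduction for LC, resp. LC⋆) -/

inductive HasType : PTerm → Formula → Prop
  | var (x : ℕ) (A : Formula) : HasType (.var x A) A
  | lam {x A u B} : HasType u B → (∀ F, PTerm.FVAnn x F u → F = A) →
      HasType (.lam x A u) (.imp A B)
  | app {t u A B} : HasType t (.imp A B) → HasType u A → HasType (.app t u) B
  | pair {u v A B} : HasType u A → HasType v B → HasType (.pair u v) (.conj A B)
  | projL {u A B} : HasType u (.conj A B) → HasType (.proj u false) A
  | projR {u A B} : HasType u (.conj A B) → HasType (.proj u true) B
  | injL {u A B} : HasType u A → HasType (.inj false u) (.disj A B)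
  | injR {u A B} : HasType u B → HasType (.inj true u) (.disj A B)
  | case {t x w1 y w2 A B C} : HasType t (.disj A B) →
      HasType w1 C → HasType w2 C →
      (∀ F, PTerm.FVAnn x F w1 → F = A) → (∀ F, PTerm.FVAnn y F w2 → F = B) →
      HasType (.case t x w1 y w2) C
  | lamT {α u A} : HasType u A →
      (∀ x F, PTerm.FVAnn x F u → ¬ Formula.FVt α F) →
      HasType (.lamT α u) (.all α A)
  | appT {t α A} (m : Tm) : HasType t (.all α A) → HasType (.appT t m) (A.subst α m)
  | exIntro {u α A} (m : Tm) : HasType u (A.subst α m) → HasType (.exIntro m u) (.ex α A)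
  | exElim {t α x v A C} : HasType t (.ex α A) → HasType v C →
      (∀ F, PTerm.FVAnn x F v → F = A) →
      (∀ z F, PTerm.FVAnn z F v → z ≠ x → ¬ Formula.FVt α F) →
      ¬ Formula.FVt α C →
      HasType (.exElim t α x v) C
  | efq {u P} : HasType u Formula.bot → Formula.IsAtom P → HasType (.efq P u) P
  | par {a A B u v C} : HasType u C → HasType v C →
      (∀ F, PTerm.FVAnn a F u → F = .imp A B) →
      (∀ F, PTerm.FVAnn a F v → F = .imp B A) →
      HasType (.par a A B u v) C
  | abort (A B : Formula) : HasType (.abort A B) (.imp A B)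

/-! ### Stacks -/

inductive StackElem : Type
  | term : PTerm → StackElem
  | tm : Tm → StackElem
  | proj : Bool → StackElem
  | case : ℕ → PTerm → ℕ → PTerm → StackElem
  | exElim : ℕ → ℕ → PTerm → StackElem

abbrev Stack := List StackElem

/-- Apply a proof term to one stack element. -/
def applyElem (t : PTerm) : StackElem → PTerm
  | .term u => .app t u
  | .tm m => .appT t m
  | .proj b => .proj t b
  | .case x u y v => .case t x u y v
  | .exElim α x v => .exElim t α x v

/-- `applyStack t σ` is the term `t σ₁ σ₂ ⋯ σₙ`. -/
def applyStack : PTerm → Stack → PTerm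
  | t, [] => t
  | t, e :: σ => applyStack (applyElem t e) σ

/-! ### Parallel processes and parallel contexts -/

/-- Number of elementary parallel processes of a term. -/
def nElem : PTerm → ℕ
  | .par _ _ _ u v => nElem u + nElem v
  | _ => 1

def NotPar : PTerm → Prop
  | .par _ _ _ _ _ => False
  | _ => True

/-- `ElemProc t s`: `s` is an elementary (parallel) process of `t`. -/
inductive ElemProc : PTerm → PTerm → Prop
  | refl {t} : NotPar t → ElemProc t t
  | left {a A B u v s} : ElemProc u s → ElemProc (.par a A B u v) s
  | right {a A B u v s} : ElemProc v s → ElemProc (.par a A B u v) s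

/-- The binders a₁, …, aₙ of the top-level parallel decomposition of a term. -/
def parBinders : PTerm → List ℕ
  | .par a _ _ u v => a :: (parBinders u ++ parBinders v)
  | _ => []

/-- Parallel contexts `u₁ ∥_{a₁} ⋯ [] ⋯ ∥_{aₙ} uₙ`. -/
inductive ParCtx : Type
  | hole : ParCtx
  | parL : ℕ → Formula → Formula → ParCtx → PTerm → ParCtx
  | parR : ℕ → Formula → Formula → PTerm → ParCtx → ParCtx

/-- Fill the hole of a parallel context. -/
def ParCtx.fill : ParCtx → PTerm → PTerm
  | .hole, t => t
  | .parL a A B c v, t => .par a A B (c.fill t) v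
  | .parR a A B u c, t => .par a A B u (c.fill t)

def ParCtx.binders : ParCtx → List ℕ
  | .hole => []
  | .parL a _ _ c _ => a :: c.binders
  | .parR a _ _ _ c => a :: c.binders

/-- Index (among elementary processes, from the left) of the hole of a parallel context. -/
def ParCtx.holeIdx : ParCtx → ℕ
  | .hole => 0
  | .parL _ _ _ c _ => c.holeIdx
  | .parR _ _ _ u c => nElem u + c.holeIdx

/-! ### Basic reductions and head reduction -/

/-- Contraction of the basic intuitionistic redexes and of the permutation redexes for ∥. -/
inductive Contract : PTerm → PTerm → Prop
  | beta {x A u t} : Contract (.app (.lam x A u) t) (u.substVar x t)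
  | betaT {α u m} : Contract (.appT (.lamT α u) m) (u.substT α m)
  | projPair {u v b} : Contract (.proj (.pair u v) b) (if b then v else u)
  | caseInj {b u x t0 y t1} :
      Contract (.case (.inj b u) x t0 y t1)
        (if b then t1.substVar y u else t0.substVar x u)
  | exPair {m u α x v} :
      Contract (.exElim (.exIntro m u) α x v) ((v.substT α m).substVar x u)
  | permApp {a A B u v w} : ¬ PTerm.FV a w →
      Contract (.app (.par a A B u v) w) (.par a A B (.app u w) (.app v w))
  | permProj {a A B u v b} :
      Contract (.proj (.par a A B u v) b) (.par a A B (.proj u b) (.proj v b))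
  | permCase {a A B u v x w1 y w2} : ¬ PTerm.FV a w1 → ¬ PTerm.FV a w2 →
      Contract (.case (.par a A B u v) x w1 y w2)
        (.par a A B (.case u x w1 y w2) (.case v x w1 y w2))
  | permEx {a A B u v β x w} : ¬ PTerm.FV a w →
      Contract (.exElim (.par a A B u v) β x w)
        (.par a A B (.exElim u β x w) (.exElim v β x w))

/-- Contraction of the head redex of a (non-parallel) term: a basic redex at the head of a
stack of eliminations, or the abort reduction `𝒜 u σ ↦ u` (when the types agree). -/
inductive BaseStep : PTerm → PTerm → Prop
  | contract {h h' : PTerm} (σ : Stack) :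
      Contract h h' → BaseStep (applyStack h σ) (applyStack h' σ)
  | abort {A B : Formula} {u : PTerm} (σ : Stack) {C : Formula} :
      HasType u C → HasType (applyStack (.app (.abort A B) u) σ) C →
      BaseStep (applyStack (.app (.abort A B) u) σ) u

/-- `StepAt t n t'`: `t` reduces to `t'` by contracting a head redex of one of its parallel
processes, whose starting symbol lies in the `n`-th elementary process of `t`. -/
inductive StepAt : PTerm → ℕ → PTerm → Prop
  | base {t t'} : BaseStep t t' → StepAt t 0 t'
  | parL {a A B u v u' n} : StepAt u n u' →
      StepAt (.par a A B u v) n (.par a A B u' v)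
  | parR {a A B u v v' n} : StepAt v n v' →
      StepAt (.par a A B u v) (nElem u + n) (.par a A B u v')
  | dumL {a A B v w y} (c : ParCtx) (σ : Stack) :
      a ∉ c.binders → ¬ PTerm.FV y w →
      StepAt (.par a A B (c.fill (applyStack (.app (.var a (.imp A B)) w) σ)) v)
        c.holeIdx
        (.par a A B (c.fill (v.substVar a (.lam y B w))) v)
  | dumR {a A B u w y} (c : ParCtx) (σ : Stack) :
      a ∉ c.binders → ¬ PTerm.FV y w →
      StepAt (.par a A B u (c.fill (applyStack (.app (.var a (.imp B A)) w) σ)))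
        (nElem u + c.holeIdx)
        (.par a A B u (c.fill (u.substVar a (.lam y A w))))

/-- Head reduction: contract the leftmost among the head redexes of the parallel processes. -/
def Head (t t' : PTerm) : Prop :=
  ∃ n, StepAt t n t' ∧ ∀ m s, StepAt t m s → n ≤ m

/-- Head normal forms. -/
def NF (t : PTerm) : Prop := ¬ ∃ t', Head t t'

/-- `t ∈ HN⋆`: there is no infinite head reduction sequence starting from `t`. -/
def Normalizing (t : PTerm) : Prop := Acc (fun a b => Head b a) t

/-! ### Values -/

def IsValue : PTerm → Prop
  | .lam _ _ _ => True
  | .lamT _ _ => True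
  | .pair _ _ => True
  | .inj _ _ => True
  | .exIntro _ _ => True
  | .efq _ _ => True
  | .abort _ _ => True
  | _ => False

/-! ### Classical realizability -/

/-- `Red C` is the set `‖C‖` of valid tests (stacks) for the formula `C`. -/
def Red : Formula → Set Stack
  | .atom _ _ => {[]}
  | .imp A B =>
      {σ | σ = [] ∨ ∃ u ρ, σ = .term u :: ρ ∧
        (HasType u A ∧ ∀ τ ∈ Red A, Normalizing (applyStack u τ)) ∧ ρ ∈ Red B}
  | .conj A B =>
      {σ | σ = [] ∨ (∃ ρ, σ = .proj false :: ρ ∧ ρ ∈ Red A) ∨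
        (∃ ρ, σ = .proj true :: ρ ∧ ρ ∈ Red B)}
  | .disj A B =>
      {σ | σ = [] ∨ ∃ x u y v ρ, σ = .case x u y v :: ρ ∧ ∀ t,
        ((HasType t A ∧ ∀ τ ∈ Red A, Normalizing (applyStack t τ)) →
          Normalizing (applyStack (u.substVar x t) ρ)) ∧
        ((HasType t B ∧ ∀ τ ∈ Red B, Normalizing (applyStack t τ)) →
          Normalizing (applyStack (v.substVar y t) ρ))}
  | .all α A =>
      {σ | σ = [] ∨ ∃ m ρ, σ = .tm m :: ρ ∧ ρ ∈ Red (A.subst α m)}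
  | .ex α A =>
      {σ | σ = [] ∨ ∃ β x v ρ, σ = .exElim β x v :: ρ ∧ ∀ (m : Tm) (t : PTerm),
        (HasType t (A.subst α m) ∧ ∀ τ ∈ Red (A.subst α m), Normalizing (applyStack t τ)) →
          Normalizing (applyStack ((v.substT β m).substVar x t) ρ)}
termination_by C => C.depth
decreasing_by all_goals simp [Formula.depth, Formula.depth_subst] <;> omega

/-- `t ⊩ C` : classical realizability. -/
def Realizes (t : PTerm) (C : Formula) : Prop :=
  HasType t C ∧ ∀ σ ∈ Red C, Normalizing (applyStack t σ)

/-! ### Herbrand normal forms -/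

/-- `IsHerbrand u ms`: `u` is an Herbrand normal form whose list of witnesses is `ms`. -/
inductive IsHerbrand : PTerm → List Tm → Prop
  | pair (m : Tm) (v : PTerm) : IsHerbrand (.exIntro m v) [m]
  | par {u v ms ms'} (a : ℕ) (A B : Formula) :
      IsHerbrand u ms → IsHerbrand v ms' → IsHerbrand (.par a A B u v) (ms ++ ms')

/-- The Herbrand disjunction `A[m₀/α] ∨ ⋯ ∨ A[m_k/α]`. -/
def bigOr (A : Formula) (α : ℕ) : List Tm → Formula
  | [] => Formula.bot
  | [m] => A.subst α m
  | m :: ms => (A.subst α m).disj (bigOr A α ms)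

/-- `t` is a proof term in the context `Γ`: every free variable of `t` is declared in `Γ`. -/
def InCtx (Γ : List (ℕ × Formula)) (t : PTerm) : Prop :=
  ∀ x F, PTerm.FVAnn x F t → (x, F) ∈ Γ

/-- Iterated substitutions. -/
def Formula.substList (A : Formula) (rs : List (ℕ × Tm)) : Formula :=
  rs.foldl (fun A p => A.subst p.1 p.2) A

def PTerm.substTList (w : PTerm) (rs : List (ℕ × Tm)) : PTerm :=
  rs.foldl (fun w p => w.substT p.1 p.2) w

def PTerm.substVarList (w : PTerm) (ps : List (ℕ × PTerm)) : PTerm :=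
  ps.foldl (fun w p => w.substVar p.1 p.2) w


/-! A stack for `A → B` is empty or begins with a realizer `u` of `A`. The elimination spine of
`𝒜 σ` has the abort constant as its head, so no intuitionistic, permutative or Dummett redex
sits at its head: its only head step is the abort reduction to the first argument `u`, which is
head normalizable because it realizes `A`. -/

def PTerm.spine : PTerm → PTerm × Stack
  | .app t u => (t.spine.1, t.spine.2 ++ [.term u])
  | .appT t m => (t.spine.1, t.spine.2 ++ [.tm m])
  | .proj t b => (t.spine.1, t.spine.2 ++ [.proj b])
  | .case t x u y v => (t.spine.1, t.spine.2 ++ [.case x u y v])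
  | .exElim t α x v => (t.spine.1, t.spine.2 ++ [.exElim α x v])
  | t => (t, [])

theorem spine_applyElem (t : PTerm) (e : StackElem) :
    (applyElem t e).spine = (t.spine.1, t.spine.2 ++ [e]) := by
  cases e <;> rfl

theorem spine_applyStack (t : PTerm) (σ : Stack) :
    (applyStack t σ).spine = (t.spine.1, t.spine.2 ++ σ) := by
  induction σ generalizing t with
  | nil => simp [applyStack]
  | cons e σ ih => simp [applyStack, ih, spine_applyElem]

theorem spine_applyStack_abort (A B : Formula) (σ : Stack) :
    (applyStack (.abort A B) σ).spine = (.abort A B, σ) := by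
  simp [spine_applyStack, PTerm.spine]

theorem Contract.spine_fst_ne_abort {h h' : PTerm} (hc : Contract h h') (A B : Formula) :
    h.spine.1 ≠ .abort A B := by
  cases hc <;> simp [PTerm.spine]

theorem StepAt.exists_of_abort_applyStack {A B : Formula} {σ : Stack} {n : ℕ} {t' : PTerm}
    (hstep : StepAt (applyStack (.abort A B) σ) n t') : ∃ ρ, σ = .term t' :: ρ := by
  generalize ht : applyStack (.abort A B) σ = t at hstep
  have hspine := congrArg PTerm.spine ht
  rw [spine_applyStack_abort] at hspine
  cases hstep with
  | base hb =>
    cases hb with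
    | contract σ' hc =>
      rw [spine_applyStack] at hspine
      exact absurd (congrArg Prod.fst hspine).symm (hc.spine_fst_ne_abort A B)
    | abort σ' _ _ =>
      simp only [spine_applyStack, PTerm.spine] at hspine
      exact ⟨σ', by simpa using (congrArg Prod.snd hspine)⟩
  | parL _ | parR _ | dumL _ _ _ _ | dumR _ _ _ _ => simp [PTerm.spine] at hspine

theorem normalizing_abort_applyStack {A B : Formula} {σ : Stack}
    (h : ∀ u ρ, σ = .term u :: ρ → Normalizing u) : Normalizing (applyStack (.abort A B) σ) :=
  Acc.intro _ fun _ ⟨_, hstep, _⟩ =>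
    let ⟨ρ, hσ⟩ := hstep.exists_of_abort_applyStack
    h _ ρ hσ

theorem nil_mem_Red (C : Formula) : [] ∈ Red C := by
  cases C <;> simp [Red]

theorem Realizes.normalizing {t : PTerm} {C : Formula} (h : Realizes t C) : Normalizing t :=
  h.2 [] (nil_mem_Red C)

/-- **The abort operator realizes every implication**: for all formulas `A` and `B`,
`𝒜^{A→B} ⊩ A → B`. -/
theorem abort_realizes (A B : Formula) : Realizes (.abort A B) (.imp A B) := by
  refine ⟨HasType.abort A B, fun σ hσ => normalizing_abort_applyStack ?_⟩
  rintro u ρ rfl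
  rw [Red] at hσ
  obtain ⟨u', ρ', hσ', hu', -⟩ := hσ.resolve_left (List.cons_ne_nil _ _)
  cases hσ'
  exact Realizes.normalizing hu'

end LC
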